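/- Let p = 3/4, θ̃ = 1085/2244 and ε = 1/100. Set θ̃_ε = (p(1-ε)θ̃ + (1-p)(1-(2-ε)θ̃))/(1-θ̃) and p_ε = p(1-ε) + (1-p)ε. Then (1-θ̃)·(w(Φ(θ̃)) - w(θ̃_ε)) - θ̃·(w(1-p_ε) - (1-ε)·w(1-p)) > 10⁻⁵. (This inequality shows that the strategy σ* is not optimal for Player 1 at p = 3/4.) -/

import Mathlib

noncomputable section

/-- The map `f_B`: `f_B(θ) = (3p-1) - γ/θ` for `θ ≥ 1/2`, and `1-p` for `θ ≤ 1/2`,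
where `γ = 2p - 1`. -/
def fB (p θ : ℝ) : ℝ := if 1/2 ≤ θ then (3*p - 1) - (2*p - 1)/θ else 1 - p

/-- The map `f_T`: `f_T(θ) = p` for `θ ≥ 1/2`, and `(2-3p) + γ/(1-θ)` for `θ ≤ 1/2`. -/
def fT (p θ : ℝ) : ℝ := if 1/2 ≤ θ then p else (2 - 3*p) + (2*p - 1)/(1 - θ)

/-- The belief dynamics `Φ`: `Φ(x) = f_B(x)` if `x ≥ 1/2`, `f_T(x)` otherwise. -/
def Phi (p x : ℝ) : ℝ := if 1/2 ≤ x then fB p x else fT p x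

/-- `Θ_k(θ) = max(Φ^k(θ), 1 - Φ^k(θ))`. -/
def Theta (p : ℝ) (k : ℕ) (θ : ℝ) : ℝ := max ((Phi p)^[k] θ) (1 - (Phi p)^[k] θ)

/-- `w(θ) = Σ_{n=0}^∞ ∏_{k=0}^{n-1} Θ_k(θ)` (empty product = 1). -/
def w (p θ : ℝ) : ℝ := ∑' n : ℕ, ∏ k ∈ Finset.range n, Theta p k θ

/-! On the `Φ`-invariant interval `[1 - p, p]` every `Θ_k` lies in `[1/2, p]`, so `2 ≤ w ≤ 1/(1 - p)`
there, and shifting the series gives `w θ = 1 + max θ (1 - θ) · w (Φ θ)`. Unrolling this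
recursion twenty times from the crude bounds along the (rational) orbits of the four arguments
brackets each value of `w` tightly enough; the remaining inequality between rationals is
checked by evaluation in the kernel. -/

open Set

section RealDynamics

open Finset

variable {p θ : ℝ}

lemma Phi_mem_Icc (hp : 1/2 ≤ p) (h0 : 0 ≤ θ) (h1 : θ ≤ 1) : Phi p θ ∈ Icc (1 - p) p := by
  unfold Phi fB fT
  split_ifs with hθ
  · have hlo : 2*p - 1 ≤ (2*p - 1)/θ := le_div_self (by linarith) (by linarith) h1
    have hhi : (2*p - 1)/θ ≤ 2*(2*p - 1) := by
      rw [div_le_iff₀ (by linarith)]; nlinarith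
    constructor <;> linarith
  · have hlo : 2*p - 1 ≤ (2*p - 1)/(1 - θ) := le_div_self (by linarith) (by linarith) (by linarith)
    have hhi : (2*p - 1)/(1 - θ) ≤ 2*(2*p - 1) := by
      rw [div_le_iff₀ (by linarith)]; nlinarith
    constructor <;> linarith

lemma mapsTo_Phi (hp : 1/2 ≤ p) (hp1 : p ≤ 1) :
    MapsTo (Phi p) (Icc (1 - p) p) (Icc (1 - p) p) :=
  fun _ hθ => Phi_mem_Icc hp (by linarith [hθ.1]) (by linarith [hθ.2])

lemma Theta_zero : Theta p 0 θ = max θ (1 - θ) := rfl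

lemma Theta_succ (k : ℕ) : Theta p (k + 1) θ = Theta p k (Phi p θ) := by
  rw [Theta, Theta, Function.iterate_succ_apply]

lemma half_le_Theta (k : ℕ) : 1/2 ≤ Theta p k θ := by
  rw [Theta]
  rcases le_total ((Phi p)^[k] θ) (1/2) with h | h
  · exact le_max_of_le_right (by linarith)
  · exact le_max_of_le_left h

lemma Theta_le (hp : 1/2 ≤ p) (hp1 : p ≤ 1) (hθ : θ ∈ Icc (1 - p) p) (k : ℕ) :
    Theta p k θ ≤ p := by
  have hk := (mapsTo_Phi hp hp1).iterate k hθ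
  exact max_le hk.2 (by linarith [hk.1])

lemma prod_Theta_le (hp : 1/2 ≤ p) (hp1 : p ≤ 1) (hθ : θ ∈ Icc (1 - p) p) (n : ℕ) :
    ∏ k ∈ range n, Theta p k θ ≤ p ^ n := by
  simpa using prod_le_prod (s := range n)
    (fun k _ => (by linarith [half_le_Theta (p := p) (θ := θ) k])) (fun k _ => Theta_le hp hp1 hθ k)

lemma half_pow_le_prod_Theta (n : ℕ) : (1/2 : ℝ) ^ n ≤ ∏ k ∈ range n, Theta p k θ := by
  simpa using prod_le_prod (s := range n) (fun _ _ => by norm_num)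
    (fun k _ => half_le_Theta (p := p) (θ := θ) k)

lemma summable_prod_Theta (hp : 1/2 ≤ p) (hp1 : p < 1) (hθ : θ ∈ Icc (1 - p) p) :
    Summable (fun n => ∏ k ∈ range n, Theta p k θ) :=
  (summable_geometric_of_lt_one (by linarith) hp1).of_nonneg_of_le
    (fun n => (pow_nonneg (by norm_num) n).trans (half_pow_le_prod_Theta n))
    (prod_Theta_le hp hp1.le hθ)

lemma w_eq_one_add_mul (hp : 1/2 ≤ p) (hp1 : p < 1) (hθ : θ ∈ Icc (1 - p) p) :
    w p θ = 1 + max θ (1 - θ) * w p (Phi p θ) := by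
  rw [w, (summable_prod_Theta hp hp1 hθ).tsum_eq_zero_add, w, ← tsum_mul_left]
  simp only [prod_range_zero, prod_range_succ', Theta_succ, Theta_zero, mul_comm]

lemma two_le_w (hp : 1/2 ≤ p) (hp1 : p < 1) (hθ : θ ∈ Icc (1 - p) p) : 2 ≤ w p θ := by
  have hgeo := tsum_geometric_of_lt_one (r := (1/2 : ℝ)) (by norm_num) (by norm_num)
  norm_num at hgeo
  rw [← hgeo]
  exact (summable_geometric_of_lt_one (by norm_num) (by norm_num)).tsum_le_tsum
    half_pow_le_prod_Theta (summable_prod_Theta hp hp1 hθ)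

lemma w_le_inv_one_sub (hp : 1/2 ≤ p) (hp1 : p < 1) (hθ : θ ∈ Icc (1 - p) p) :
    w p θ ≤ (1 - p)⁻¹ := by
  rw [← tsum_geometric_of_lt_one (by linarith) hp1]
  exact (summable_prod_Theta hp hp1 hθ).tsum_le_tsum (prod_Theta_le hp hp1.le hθ)
    (summable_geometric_of_lt_one (by linarith) hp1)

end RealDynamics

section RationalCertificate

def PhiRat (p q : ℚ) : ℚ :=
  if 1/2 ≤ q then (3*p - 1) - (2*p - 1)/q else (2 - 3*p) + (2*p - 1)/(1 - q)

lemma Phi_ratCast (p q : ℚ) : Phi p q = PhiRat p q := by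
  have hcond : (1/2 : ℝ) ≤ q ↔ (1/2 : ℚ) ≤ q := by rw [← Rat.cast_le (K := ℝ)]; push_cast; rfl
  simp only [Phi, fB, fT, PhiRat, hcond]
  split_ifs <;> push_cast <;> rfl

def wUnroll (p c : ℚ) : ℕ → ℚ → ℚ
  | 0, _ => c
  | n + 1, q => 1 + max q (1 - q) * wUnroll p c n (PhiRat p q)

variable {p c : ℚ}

lemma wUnroll_le_w (hp : 1/2 ≤ (p : ℝ)) (hp1 : (p : ℝ) < 1)
    (hc : ∀ θ ∈ Icc (1 - (p : ℝ)) p, (c : ℝ) ≤ w p θ) (n : ℕ) {q : ℚ}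
    (hq : (q : ℝ) ∈ Icc (1 - (p : ℝ)) p) : (wUnroll p c n q : ℝ) ≤ w p q := by
  induction n generalizing q with
  | zero => exact hc q hq
  | succ n ih =>
    have hΦq := mapsTo_Phi hp hp1.le hq
    rw [Phi_ratCast] at hΦq
    rw [w_eq_one_add_mul hp hp1 hq, wUnroll, Phi_ratCast]
    push_cast
    gcongr
    · exact le_max_of_le_right (by linarith [hq.2])
    · exact ih hΦq

lemma w_le_wUnroll (hp : 1/2 ≤ (p : ℝ)) (hp1 : (p : ℝ) < 1)
    (hc : ∀ θ ∈ Icc (1 - (p : ℝ)) p, w p θ ≤ c) (n : ℕ) {q : ℚ}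
    (hq : (q : ℝ) ∈ Icc (1 - (p : ℝ)) p) : w p q ≤ wUnroll p c n q := by
  induction n generalizing q with
  | zero => exact hc q hq
  | succ n ih =>
    have hΦq := mapsTo_Phi hp hp1.le hq
    rw [Phi_ratCast] at hΦq
    rw [w_eq_one_add_mul hp hp1 hq, wUnroll, Phi_ratCast]
    push_cast
    gcongr
    · exact le_max_of_le_right (by linarith [hq.2])
    · exact ih hΦq

lemma w_mem_Icc_wUnroll (hp : 1/2 ≤ (p : ℝ)) (hp1 : (p : ℝ) < 1) (n : ℕ) {q : ℚ}
    (hq : (q : ℝ) ∈ Icc (1 - (p : ℝ)) p) :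
    w p q ∈ Icc (wUnroll p 2 n q : ℝ) (wUnroll p (1 - p)⁻¹ n q) := by
  refine ⟨wUnroll_le_w hp hp1 (fun θ hθ => ?_) n hq, w_le_wUnroll hp hp1 (fun θ hθ => ?_) n hq⟩
  · exact_mod_cast two_le_w hp hp1 hθ
  · exact_mod_cast w_le_inv_one_sub hp hp1 hθ

end RationalCertificate

/-- At `p = 3/4`, with `θ̃ = 1085/2244` and `ε = 1/100`, the key inequality showing
that `σ*` is not optimal for Player 1 at `p = 3/4`:
`(1-θ̃)(w(Φ(θ̃)) - w(θ̃_ε)) - θ̃(w(1-p_ε) - (1-ε)w(1-p)) > 10⁻⁵`. -/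
theorem sigma_star_not_optimal_at_three_quarters :
    let p : ℝ := 3/4
    let θt : ℝ := 1085/2244
    let ε : ℝ := 1/100
    let θε : ℝ := (p*(1-ε)*θt + (1-p)*(1-(2-ε)*θt))/(1-θt)
    let pε : ℝ := p*(1-ε) + (1-p)*ε
    (1-θt)*(w p (Phi p θt) - w p θε) - θt*(w p (1-pε) - (1-ε)*w p (1-p))
      > 1/100000 := by
  intro p θt ε θε pε
  have bounds (q : ℚ) (hq : (q : ℝ) ∈ Icc (1/4) (3/4)) :=
    w_mem_Icc_wUnroll (p := 3/4) (by norm_num) (by norm_num) 20 (by norm_num; exact hq)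
  -- `Φ θ̃ = 3329/4636`, `θ̃_ε = 33073/46360`, `1 - p_ε = 51/200`
  have hA := (bounds (3329/4636) (by norm_num)).1
  have hB := (bounds (33073/46360) (by norm_num)).2
  have hC := (bounds (51/200) (by norm_num)).2
  have hD := (bounds (1/4) (by norm_num)).1
  have key : (1 - 1085/2244 : ℚ) *
        (wUnroll (3/4) 2 20 (3329/4636) - wUnroll (3/4) (1 - 3/4)⁻¹ 20 (33073/46360)) -
      1085/2244 *
        (wUnroll (3/4) (1 - 3/4)⁻¹ 20 (51/200) - (1 - 1/100) * wUnroll (3/4) 2 20 (1/4)) >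
      1/100000 := by
    decide +kernel
  have key' := (Rat.cast_lt (K := ℝ)).2 key
  push_cast at hA hB hC hD key'
  norm_num [p, θt, ε, θε, pε, Phi, fB, fT]
  linarith
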